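/- arXiv:2004.05230 — 5 statements merged into one kernel-verified Lean document; each statement's English description precedes it below -/
import Mathlib

section
/- Let P be a locally finite partially ordered set, F a field, G a group, and θ : P → G any function. Then for all g, h ∈ G, the product of the subspaces A^θ(g) and A^θ(h) of the incidence algebra I(P,F) is contained in A^θ(gh); that is, if f₁ ∈ A^θ(g) and f₂ ∈ A^θ(h), then the convolution product f₁f₂ lies in A^θ(gh). -/
/-- `A^θ(g)`: the `F`-subspace of the incidence algebra `I(P,F)` consisting of the functions
`f` with `f x y = 0` whenever `x ≤ y` and `(θ x)⁻¹ * θ y ≠ g`. -/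
def elemSubspace (F : Type*) [Field F] {α : Type*} [PartialOrder α] [LocallyFiniteOrder α]
    {G : Type*} [Group G] (θ : α → G) (g : G) :
    Submodule F (IncidenceAlgebra F α) where
  carrier := {f | ∀ x y : α, x ≤ y → (θ x)⁻¹ * θ y ≠ g → f x y = 0}
  zero_mem' := by intro x y _ _; rfl
  add_mem' := by
    intro f₁ f₂ h₁ h₂ x y hxy hg
    show (f₁ + f₂) x y = 0
    rw [IncidenceAlgebra.add_apply, h₁ x y hxy hg, h₂ x y hxy hg, add_zero]
  smul_mem' := by
    intro c f hf x y hxy hg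
    show (c • f) x y = 0
    rw [IncidenceAlgebra.constSMul_apply, hf x y hxy hg, smul_zero]


/-- If `f₁ ∈ A^θ(g)` and `f₂ ∈ A^θ(h)`, then the convolution product `f₁ * f₂`
lies in `A^θ(g * h)`. -/
theorem elemSubspace_mul_mem {F α G : Type*} [Field F] [PartialOrder α] [LocallyFiniteOrder α]
    [DecidableEq α] [Group G] (θ : α → G) (g h : G) (f₁ f₂ : IncidenceAlgebra F α)
    (h₁ : f₁ ∈ elemSubspace F θ g) (h₂ : f₂ ∈ elemSubspace F θ h) :
    f₁ * f₂ ∈ elemSubspace F θ (g * h) := by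
  intro x y hxy hg
  show (f₁ * f₂) x y = 0
  rw [IncidenceAlgebra.mul_apply]
  refine Finset.sum_eq_zero fun z hz => ?_
  rw [Finset.mem_Icc] at hz
  by_cases hzg : (θ x)⁻¹ * θ z = g
  · have : (θ z)⁻¹ * θ y ≠ h := fun hh => hg (by rw [← hzg, ← hh]; group)
    rw [h₂ z y hz.2 this, mul_zero]
  · rw [h₁ x z hz.1 hzg, zero_mul]
end

section
/- Let P be a locally finite partially ordered set, F a field, G a group, and θ : P → G any function. The family of subspaces (A^θ(g))_{g ∈ G} forms an internal direct sum decomposition of the incidence algebra I(P,F) (i.e., the family is independent and its supremum is all of I(P,F), so that A = ⊕_{g ∈ G} A^θ(g) is a G-grading of I(P,F)) if and only if the set G_θ = {θ(x)⁻¹θ(y) : x, y ∈ P, x ≤ y} is finite. -/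
/-- Functions vanishing on all pairs whose quotient lies in `T`. -/
def vanishSubspace (F : Type*) [Field F] {α : Type*} [PartialOrder α] [LocallyFiniteOrder α]
    {G : Type*} [Group G] (θ : α → G) (T : Set G) :
    Submodule F (IncidenceAlgebra F α) where
  carrier := {f | ∀ x y : α, x ≤ y → (θ x)⁻¹ * θ y ∈ T → f x y = 0}
  zero_mem' := by intro x y _ _; rfl
  add_mem' := by
    intro f₁ f₂ h₁ h₂ x y hxy hg
    show (f₁ + f₂) x y = 0
    rw [IncidenceAlgebra.add_apply, h₁ x y hxy hg, h₂ x y hxy hg, add_zero]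
  smul_mem' := by
    intro c f hf x y hxy hg
    show (c • f) x y = 0
    rw [IncidenceAlgebra.constSMul_apply, hf x y hxy hg, smul_zero]

lemma elemSubspace_le_vanish (F : Type*) [Field F] {α : Type*} [PartialOrder α]
    [LocallyFiniteOrder α] {G : Type*} [Group G] (θ : α → G) {g : G} {T : Set G}
    (hg : g ∉ T) : elemSubspace F θ g ≤ vanishSubspace F θ T := by
  intro f hf x y hxy hmem
  exact hf x y hxy (fun h => hg (h ▸ hmem))

lemma incidence_sum_apply {F α G : Type*} [Field F] [PartialOrder α] [LocallyFiniteOrder α]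
    (s : Finset G) (f : G → IncidenceAlgebra F α) (a b : α) :
    (∑ i ∈ s, f i) a b = ∑ i ∈ s, f i a b := by
  induction s using Finset.cons_induction with
  | empty => rfl
  | cons i s hi ih => simp [Finset.sum_cons, IncidenceAlgebra.add_apply, ih]

/-- The family `(A^θ(g))_{g ∈ G}` is an internal direct sum decomposition of the
incidence algebra `I(P,F)` (independent and with supremum everything) if and only if
`G_θ = {θ(x)⁻¹ * θ(y) : x ≤ y}` is finite. -/
theorem elemSubspace_directSum_iff {F α G : Type*} [Field F] [PartialOrder α]
    [LocallyFiniteOrder α] [Group G] (θ : α → G) :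
    (iSupIndep (fun g : G => elemSubspace F θ g) ∧
        (⨆ g : G, elemSubspace F θ g) = ⊤) ↔
      {g : G | ∃ x y : α, x ≤ y ∧ (θ x)⁻¹ * θ y = g}.Finite := by
  classical
  constructor
  · rintro ⟨-, htop⟩
    -- use the zeta function
    set ζ : IncidenceAlgebra F α :=
      ⟨fun x y => if x ≤ y then (1 : F) else 0, fun a b h => if_neg h⟩ with hζ
    have hζmem : ζ ∈ ⨆ g : G, elemSubspace F θ g := htop ▸ Submodule.mem_top
    obtain ⟨s, hs⟩ := Submodule.mem_iSup_iff_exists_finset.1 hζmem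
    have hle : (⨆ g ∈ s, elemSubspace F θ g) ≤ vanishSubspace F θ ((↑s : Set G)ᶜ) := by
      refine iSup₂_le fun g hg => elemSubspace_le_vanish F θ ?_
      simp [hg]
    have hvan := hle hs
    refine Set.Finite.subset s.finite_toSet ?_
    rintro g ⟨x, y, hxy, rfl⟩
    by_contra hg
    have := hvan x y hxy (by simpa using hg)
    rw [hζ] at this
    simp only [IncidenceAlgebra.coe_mk, if_pos hxy] at this
    exact one_ne_zero this
  · intro hS
    constructor
    · -- independence
      intro g
      rw [Submodule.disjoint_def]
      intro f hf hf'
      have hle : (⨆ h, ⨆ _ : h ≠ g, elemSubspace F θ h) ≤ vanishSubspace F θ {g} := by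
        refine iSup₂_le fun h hh => elemSubspace_le_vanish F θ ?_
        simpa using hh
      have hf'' := hle hf'
      ext x y hxy
      show f x y = 0
      by_cases hq : (θ x)⁻¹ * θ y = g
      · exact hf'' x y hxy (by simp [hq])
      · exact hf x y hxy hq
    · -- supremum is everything
      rw [eq_top_iff]
      intro f _
      set s : Finset G := hS.toFinset with hs
      set piece : G → IncidenceAlgebra F α := fun g =>
        ⟨fun x y => if x ≤ y ∧ (θ x)⁻¹ * θ y = g then f x y else 0,
          fun a b h => by simp [h]⟩ with hpiece
      have hmem : ∀ g, piece g ∈ elemSubspace F θ g := by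
        intro g x y hxy hg
        show (if x ≤ y ∧ (θ x)⁻¹ * θ y = g then f x y else 0) = 0
        exact if_neg (fun h => hg h.2)
      have hdecomp : f = ∑ g ∈ s, piece g := by
        ext a b hab
        rw [incidence_sum_apply]
        have hq : (θ a)⁻¹ * θ b ∈ s := by
          rw [hs, Set.Finite.mem_toFinset]
          exact ⟨a, b, hab, rfl⟩
        calc f a b = if (θ a)⁻¹ * θ b ∈ s then f a b else 0 := by rw [if_pos hq]
          _ = ∑ g ∈ s, if (θ a)⁻¹ * θ b = g then f a b else 0 :=
              (Finset.sum_ite_eq s ((θ a)⁻¹ * θ b) (fun _ => f a b)).symm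
          _ = ∑ g ∈ s, piece g a b := by
              refine Finset.sum_congr rfl fun g _ => ?_
              show _ = (if a ≤ b ∧ (θ a)⁻¹ * θ b = g then f a b else 0)
              simp [hab]
      rw [hdecomp]
      exact Submodule.sum_mem _ fun g _ =>
        Submodule.mem_iSup_of_mem g (hmem g)
end

section
/- Let P be a locally finite partially ordered set, F a field, G a group, and θ, μ : P → G. Then A^θ(g) = A^μ(g) for every g ∈ G if and only if the function x ↦ μ(x)·θ(x)⁻¹ is constant on each connected component of P, i.e., whenever x and y are connected in P, one has μ(x)θ(x)⁻¹ = μ(y)θ(y)⁻¹. -/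
/-- Single-entry element of the incidence algebra. -/
def singleEntry (F : Type*) [Field F] {α : Type*} [PartialOrder α] [DecidableEq α]
    {x y : α} (hxy : x ≤ y) : IncidenceAlgebra F α where
  toFun a b := if a = x ∧ b = y then 1 else 0
  eq_zero_of_not_le' a b h := by
    rcases eq_or_ne a x with rfl | ha
    · rcases eq_or_ne b y with rfl | hb
      · exact absurd hxy h
      · simp [hb]
    · simp [ha]

/-- `A^θ(g) = A^μ(g)` for every `g ∈ G` if and only if `x ↦ μ(x) * θ(x)⁻¹` is
constant on each connected component of `P`, connectedness being the equivalence relation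
generated by comparability. -/
theorem elemSubspace_eq_iff {F α G : Type*} [Field F] [PartialOrder α]
    [LocallyFiniteOrder α] [Group G] (θ μ : α → G) :
    (∀ g : G, elemSubspace F θ g = elemSubspace F μ g) ↔
      ∀ x y : α, Relation.EqvGen (fun a b : α => a ≤ b ∨ b ≤ a) x y →
        μ x * (θ x)⁻¹ = μ y * (θ y)⁻¹ := by
  classical
  constructor
  · intro h x y hxy
    -- key: for comparable x ≤ y, μ x * (θ x)⁻¹ = μ y * (θ y)⁻¹
    have key : ∀ a b : α, a ≤ b → μ a * (θ a)⁻¹ = μ b * (θ b)⁻¹ := by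
      intro a b hab
      have hmem : singleEntry F hab ∈ elemSubspace F θ ((θ a)⁻¹ * θ b) := by
        intro p q hpq hg
        show (if p = a ∧ q = b then (1:F) else 0) = 0
        rw [if_neg]
        rintro ⟨rfl, rfl⟩
        exact hg rfl
      rw [h] at hmem
      by_contra hne
      have := hmem a b hab (by
        intro hgeq
        apply hne
        have h2 : (μ a)⁻¹ * μ b = (θ a)⁻¹ * θ b := hgeq
        have h3 : μ b = μ a * ((θ a)⁻¹ * θ b) := by rw [← h2]; group
        rw [h3]; group)
      simp [singleEntry] at this
    induction hxy with
    | rel a b hab =>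
      rcases hab with hab | hab
      · exact key a b hab
      · exact (key b a hab).symm
    | refl a => rfl
    | symm a b _ ih => exact ih.symm
    | trans a b c _ _ ih1 ih2 => exact ih1.trans ih2
  · intro h g
    have key : ∀ a b : α, a ≤ b → ((θ a)⁻¹ * θ b ≠ g ↔ (μ a)⁻¹ * μ b ≠ g) := by
      intro a b hab
      have := h a b (Relation.EqvGen.rel a b (Or.inl hab))
      have heq : (θ a)⁻¹ * θ b = (μ a)⁻¹ * μ b := by
        have : μ a * (θ a)⁻¹ * θ b = μ b := by rw [this]; group
        calc (θ a)⁻¹ * θ b = (μ a)⁻¹ * (μ a * (θ a)⁻¹ * θ b) := by group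
        _ = (μ a)⁻¹ * μ b := by rw [this]
      rw [heq]
    ext f
    constructor
    · intro hf p q hpq hg
      exact hf p q hpq (((key p q hpq).mpr hg))
    · intro hf p q hpq hg
      exact hf p q hpq ((key p q hpq).mp hg)
end

section
/- Let P be a locally finite partially ordered set, F a field, G a group, and ν, μ : P → G. Let r be an invertible element (unit) of the incidence algebra I(P,F), and suppose the inner automorphism ψ_r : f ↦ r f r⁻¹ maps A^ν(g) into A^μ(g) for every g ∈ G. Then ν(x)⁻¹ν(y) = μ(x)⁻¹μ(y) for all x ≤ y in P. -/
/-!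
Conjugation by a unit `r` sends the matrix unit `e_{xy}`, which lies in `A^ν(g)` for
`g = ν(x)⁻¹ν(y)`, to a function whose `(x, y)` entry is `r(x,x) r⁻¹(y,y)`. The diagonal entries
of a unit are units of `F`, so this entry is nonzero; membership in `A^μ(g)` then forces
`μ(x)⁻¹μ(y) = g`.
-/

open Finset

namespace IncidenceAlgebra

variable {𝕜 α : Type*}

section Single

variable [LE α] [DecidableEq α] [Zero 𝕜] [One 𝕜]

variable (𝕜) in
def single {x y : α} (hxy : x ≤ y) : IncidenceAlgebra 𝕜 α :=
  ⟨fun a b ↦ if a = x ∧ b = y then 1 else 0, by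
    rintro a b hab
    rw [if_neg]
    rintro ⟨rfl, rfl⟩
    exact hab hxy⟩

lemma single_apply {x y : α} (hxy : x ≤ y) (a b : α) :
    single 𝕜 hxy a b = if a = x ∧ b = y then 1 else 0 := rfl

end Single

variable [PartialOrder α] [LocallyFiniteOrder α] [Semiring 𝕜]

lemma mul_apply_self (f g : IncidenceAlgebra 𝕜 α) (a : α) : (f * g) a a = f a a * g a a := by
  rw [mul_apply, Icc_self, sum_singleton]

variable [DecidableEq α]

variable (𝕜) in
def evalDiag (a : α) : IncidenceAlgebra 𝕜 α →* 𝕜 where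
  toFun f := f a a
  map_one' := by rw [one_apply, if_pos rfl]
  map_mul' f g := mul_apply_self f g a

lemma isUnit_apply_self {f : IncidenceAlgebra 𝕜 α} (hf : IsUnit f) (a : α) : IsUnit (f a a) :=
  hf.map (evalDiag 𝕜 a)

lemma mul_single_apply (f : IncidenceAlgebra 𝕜 α) {x y : α} (hxy : x ≤ y)
    (a c : α) : (f * single 𝕜 hxy) a c = if c = y then f a x else 0 := by
  simp only [mul_apply, single_apply, mul_ite, mul_one, mul_zero, ite_and, sum_ite_eq',
    mem_Icc]
  by_cases hc : c = y
  · subst hc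
    by_cases hax : a ≤ x
    · simp [hax, hxy]
    · simp [hax, apply_eq_zero_of_not_le hax]
  · simp [hc]

lemma mul_single_mul_apply (f h : IncidenceAlgebra 𝕜 α) {x y : α} (hxy : x ≤ y)
    (a b : α) : (f * single 𝕜 hxy * h) a b = f a x * h y b := by
  rw [mul_apply]
  simp only [mul_single_apply, ite_mul, zero_mul, sum_ite_eq']
  by_cases hay : a ≤ y
  · by_cases hyb : y ≤ b
    · rw [if_pos (mem_Icc.2 ⟨hay, hyb⟩)]
    · rw [if_neg (fun h ↦ hyb (mem_Icc.1 h).2), apply_eq_zero_of_not_le hyb, mul_zero]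
  · have hax : ¬a ≤ x := fun hax ↦ hay (hax.trans hxy)
    rw [if_neg (fun h ↦ hay (mem_Icc.1 h).1), apply_eq_zero_of_not_le hax, zero_mul]

end IncidenceAlgebra

open IncidenceAlgebra

lemma single_mem_elemSubspace {F α G : Type*} [Field F] [PartialOrder α] [LocallyFiniteOrder α]
    [DecidableEq α] [Group G] (θ : α → G) {x y : α} (hxy : x ≤ y) :
    single F hxy ∈ elemSubspace F θ ((θ x)⁻¹ * θ y) := by
  intro a b _ hab
  rw [single_apply, if_neg]
  rintro ⟨rfl, rfl⟩
  exact hab rfl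

/-- if `r` is a unit of `I(P,F)` and the inner automorphism
`ψ_r : f ↦ r * f * r⁻¹` maps `A^ν(g)` into `A^μ(g)` for every `g ∈ G`, then
`ν(x)⁻¹ν(y) = μ(x)⁻¹μ(y)` for all `x ≤ y` in `P`. -/
theorem inner_maps_elemSubspace {F α G : Type*} [Field F] [PartialOrder α]
    [LocallyFiniteOrder α] [DecidableEq α] [Group G] (ν μ : α → G)
    (r : (IncidenceAlgebra F α)ˣ)
    (h : ∀ g : G, ∀ f ∈ elemSubspace F ν g,
      (r : IncidenceAlgebra F α) * f * (↑r⁻¹ : IncidenceAlgebra F α) ∈ elemSubspace F μ g) :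
    ∀ x y : α, x ≤ y → (ν x)⁻¹ * ν y = (μ x)⁻¹ * μ y := by
  intro x y hxy
  by_contra hne
  have hzero := h _ _ (single_mem_elemSubspace ν hxy) x y hxy (Ne.symm hne)
  rw [mul_single_mul_apply] at hzero
  exact mul_ne_zero (isUnit_apply_self r.isUnit x).ne_zero (isUnit_apply_self r⁻¹.isUnit y).ne_zero
    hzero
end

section
/- Let P be a locally finite, bounded partially ordered set, F a field of characteristic zero, G a group, and θ : P → G a function with G_θ finite; let A^θ denote I(P,F) with the elementary G-grading determined by θ. Then a polynomial Φ in the free G-graded algebra F⟨X⟩ is a G-graded polynomial identity of A^θ if and only if, for every maximal chain C ⊆ P, Φ is a G-graded polynomial identity of the subalgebra I(C,F) with the elementary grading determined by the restriction θ|_C. Equivalently, T_G(A^θ) = ⋂_C T_G(A_C^{θ|_C}), the intersection taken over all maximal chains C of P. -/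
/-- `Φ`, an element of the free algebra over `F` on the variables `x_i^g` (`i ∈ ℕ`, `g ∈ G`),
is a `G`-graded polynomial identity of the algebra `A` graded by the family of subspaces
`Asub : G → Submodule F A` if `Φ` vanishes under every substitution sending each variable
`x_i^g` to an element of `Asub g`. -/
def IsGradedPI {F A G : Type*} [Field F] [Ring A] [Algebra F A]
    (Asub : G → Submodule F A) (Phi : FreeAlgebra F (ℕ × G)) : Prop :=
  ∀ v : ℕ × G → A, (∀ p : ℕ × G, v p ∈ Asub p.2) → FreeAlgebra.lift F v Phi = 0

/-- The subspace `I(Q,F)` of the incidence algebra `I(P,F)` consisting of the functions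
vanishing off `Q × Q`; for `Q` a chain it is a (sub)incidence algebra of a chain. -/
def chainSubspace (F : Type*) [Field F] {α : Type*} [PartialOrder α] [LocallyFiniteOrder α]
    (Q : Set α) : Submodule F (IncidenceAlgebra F α) where
  carrier := {f | ∀ x y : α, ¬(x ∈ Q ∧ y ∈ Q) → f x y = 0}
  zero_mem' := by intro x y _; rfl
  add_mem' := by
    intro f₁ f₂ h₁ h₂ x y hxy
    show (f₁ + f₂) x y = 0
    rw [IncidenceAlgebra.add_apply, h₁ x y hxy, h₂ x y hxy, add_zero]
  smul_mem' := by
    intro c f hf x y hxy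
    show (c • f) x y = 0
    rw [IncidenceAlgebra.constSMul_apply, hf x y hxy, smul_zero]

/-! Write `X_S` for `Φ` evaluated at the restriction of the substitution `v` to `S × S`. The
`(z, w)` entry of `Φ(v)` is that of `X_{[z, w]}`, and `[z, w]` is finite. If `a, b` are incomparable,
then `X_{E+a} - X_E` lies in the two-sided ideal of functions vanishing at `(x, y)` unless
`x ≤ a ≤ y`, and likewise for `b`; these two ideals multiply to zero, which makes the identity
`X_{E+a+b} + X_E = X_{E+a} + X_{E+b}` stable under products. Induction on `#D` therefore reduces
`X_D = 0` to chains `D`, and these lie in maximal chains. -/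

theorem mul_add_mul_eq_mul_add_mul_of_add_eq {R : Type*} [Ring R] {a₁ b₁ c₁ d₁ a₂ b₂ c₂ d₂ : R}
    (h₁ : a₁ + b₁ = c₁ + d₁) (h₂ : a₂ + b₂ = c₂ + d₂) (hcd : (c₁ - b₁) * (d₂ - b₂) = 0)
    (hdc : (d₁ - b₁) * (c₂ - b₂) = 0) : a₁ * a₂ + b₁ * b₂ = c₁ * c₂ + d₁ * d₂ := by
  obtain rfl : a₁ = c₁ + d₁ - b₁ := eq_sub_of_add_eq h₁
  obtain rfl : a₂ = c₂ + d₂ - b₂ := eq_sub_of_add_eq h₂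
  calc (c₁ + d₁ - b₁) * (c₂ + d₂ - b₂) + b₁ * b₂
      = c₁ * c₂ + d₁ * d₂ + (c₁ - b₁) * (d₂ - b₂) + (d₁ - b₁) * (c₂ - b₂) := by noncomm_ring
    _ = c₁ * c₂ + d₁ * d₂ := by rw [hcd, hdc, add_zero, add_zero]

theorem Finset.induction_on_isChain {α : Type*} [DecidableEq α] [Preorder α] {P : Set α → Prop}
    (chain : ∀ D : Finset α, IsChain (· ≤ ·) (D : Set α) → P D)
    (insert_insert : ∀ a b Q, ¬a ≤ b → ¬b ≤ a →
      P Q → P (insert a Q) → P (insert b Q) → P (insert a (insert b Q)))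
    (D : Finset α) : P D := by
  induction D using Finset.strongInduction with
  | H D ih =>
  by_cases hD : IsChain (· ≤ ·) (D : Set α)
  · exact chain D hD
  obtain ⟨a, ha, b, hb, hne, hab, hba⟩ : ∃ a ∈ D, ∃ b ∈ D, a ≠ b ∧ ¬a ≤ b ∧ ¬b ≤ a := by
    simpa [IsChain, Set.Pairwise] using hD
  set E := (D.erase a).erase b
  have hbE : insert b E = D.erase a := Finset.insert_erase (Finset.mem_erase.2 ⟨hne.symm, hb⟩)
  have haE : insert a E ⊆ D.erase b := by grind
  have hDE : D = insert a (insert b E) := by rw [hbE, Finset.insert_erase ha]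
  have hE := ih E ((Finset.erase_subset b _).trans_ssubset (Finset.erase_ssubset ha))
  have haE' := ih (insert a E) (haE.trans_ssubset (Finset.erase_ssubset hb))
  have hbE' := ih (insert b E) (hbE ▸ Finset.erase_ssubset ha)
  rw [Finset.coe_insert] at haE' hbE'
  rw [hDE, Finset.coe_insert, Finset.coe_insert]
  exact insert_insert a b E hab hba hE haE' hbE'

theorem FreeAlgebra.lift_sub_lift_mem {R X A : Type*} [CommRing R] [Ring A] [Algebra R A]
    (I : TwoSidedIdeal A) {v w : X → A} (h : ∀ x, v x - w x ∈ I) (Φ : FreeAlgebra R X) :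
    lift R v Φ - lift R w Φ ∈ I := by
  simp only [← I.rel_iff] at h ⊢
  induction Φ with
  | grade0 r => simpa only [AlgHom.commutes] using I.ringCon.refl _
  | grade1 x => simpa only [lift_ι_apply] using h x
  | mul Φ Ψ hΦ hΨ => simpa only [map_mul] using I.ringCon.mul hΦ hΨ
  | add Φ Ψ hΦ hΨ => simpa only [map_add] using I.ringCon.add hΦ hΨ

namespace IncidenceAlgebra

section Restrict

variable {𝕜 α : Type*} [Zero 𝕜] [LE α]

open Classical in
noncomputable def restrict (Q : Set α) (f : IncidenceAlgebra 𝕜 α) : IncidenceAlgebra 𝕜 α :=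
  ⟨fun x y => if x ∈ Q ∧ y ∈ Q then f x y else 0, fun x y hxy => by
    rw [apply_eq_zero_of_not_le hxy, ite_self]⟩

theorem restrict_apply_of_mem {Q : Set α} {x y : α} (hx : x ∈ Q) (hy : y ∈ Q)
    (f : IncidenceAlgebra 𝕜 α) : restrict Q f x y = f x y :=
  if_pos ⟨hx, hy⟩

theorem restrict_apply_of_notMem {Q : Set α} {x y : α} (h : ¬(x ∈ Q ∧ y ∈ Q))
    (f : IncidenceAlgebra 𝕜 α) : restrict Q f x y = 0 :=
  if_neg h

theorem restrict_insert_apply {Q : Set α} {c x y : α} (hx : x ≠ c) (hy : y ≠ c)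
    (f : IncidenceAlgebra 𝕜 α) : restrict (insert c Q) f x y = restrict Q f x y := by
  simp only [restrict, coe_mk]
  split_ifs <;> simp_all

end Restrict

section RestrictAdd

variable {𝕜 α : Type*} [AddCommMonoid 𝕜] [Preorder α]

theorem restrict_insert_insert_add {a b : α} (hab : ¬a ≤ b) (hba : ¬b ≤ a) (Q : Set α)
    (f : IncidenceAlgebra 𝕜 α) :
    restrict (insert a (insert b Q)) f + restrict Q f =
      restrict (insert a Q) f + restrict (insert b Q) f := by
  ext x y hxy
  simp only [add_apply, restrict, coe_mk]
  split_ifs <;> simp only [Set.mem_insert_iff] at * <;> grind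

end RestrictAdd

section Ideal

variable {𝕜 α : Type*} [Ring 𝕜] [Preorder α] [LocallyFiniteOrder α] [DecidableEq α]

def vanishingIdeal (W : Set (α × α))
    (hW : ∀ ⦃x u y⦄, x ≤ u → u ≤ y → (x, y) ∈ W → (x, u) ∈ W ∧ (u, y) ∈ W) :
    TwoSidedIdeal (IncidenceAlgebra 𝕜 α) :=
  .mk' {f | ∀ x y, (x, y) ∈ W → f x y = 0} (fun _ _ _ => rfl)
    (fun hf hg x y hxy => by rw [add_apply, hf x y hxy, hg x y hxy, add_zero])
    (fun hf x y hxy => by rw [neg_apply, hf x y hxy, neg_zero])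
    (fun hg x y hxy => Finset.sum_eq_zero fun u hu => by
      rw [Finset.mem_Icc] at hu
      rw [hg u y (hW hu.1 hu.2 hxy).2, mul_zero])
    (fun hf x y hxy => Finset.sum_eq_zero fun u hu => by
      rw [Finset.mem_Icc] at hu
      rw [hf x u (hW hu.1 hu.2 hxy).1, zero_mul])

theorem mem_vanishingIdeal {W : Set (α × α)} {hW} {f : IncidenceAlgebra 𝕜 α} :
    f ∈ vanishingIdeal W hW ↔ ∀ x y, (x, y) ∈ W → f x y = 0 :=
  TwoSidedIdeal.mem_mk' ..

def idealThrough (c : α) : TwoSidedIdeal (IncidenceAlgebra 𝕜 α) :=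
  vanishingIdeal {p | ¬(p.1 ≤ c ∧ c ≤ p.2)} fun _ _ _ hxu huy hxy =>
    ⟨fun h => hxy ⟨h.1, h.2.trans huy⟩, fun h => hxy ⟨hxu.trans h.1, h.2⟩⟩

theorem mem_idealThrough {c : α} {f : IncidenceAlgebra 𝕜 α} :
    f ∈ idealThrough c ↔ ∀ x y, ¬(x ≤ c ∧ c ≤ y) → f x y = 0 :=
  mem_vanishingIdeal

theorem mul_eq_zero_of_mem_idealThrough {a b : α} (hab : ¬a ≤ b) {f g : IncidenceAlgebra 𝕜 α}
    (hf : f ∈ idealThrough a) (hg : g ∈ idealThrough b) : f * g = 0 := by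
  ext x y _
  refine Finset.sum_eq_zero fun u _ => ?_
  by_cases hau : a ≤ u
  · rw [mem_idealThrough.1 hg u y fun h => hab (hau.trans h.1), mul_zero]
  · rw [mem_idealThrough.1 hf x u fun h => hau h.2, zero_mul]

end Ideal

section Lift

variable {𝕜 α ι : Type*} [CommRing 𝕜] [PartialOrder α] [LocallyFiniteOrder α] [DecidableEq α]
  (v : ι → IncidenceAlgebra 𝕜 α) (Φ : FreeAlgebra 𝕜 ι)

open FreeAlgebra

theorem lift_restrict_apply_of_ordConnected {Q : Set α} (hQ : Q.OrdConnected) {x y : α}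
    (hx : x ∈ Q) (hy : y ∈ Q) : lift 𝕜 (restrict Q ∘ v) Φ x y = lift 𝕜 v Φ x y := by
  let I : TwoSidedIdeal (IncidenceAlgebra 𝕜 α) := vanishingIdeal (Q ×ˢ Q)
    fun _ _ _ hxu huy ⟨hx, hy⟩ => ⟨⟨hx, hQ.out hx hy ⟨hxu, huy⟩⟩, ⟨hQ.out hx hy ⟨hxu, huy⟩, hy⟩⟩
  have hgen (i : ι) : (restrict Q ∘ v) i - v i ∈ I := mem_vanishingIdeal.2 fun x y ⟨hx, hy⟩ => by
    rw [sub_apply, Function.comp_apply, restrict_apply_of_mem hx hy, sub_self]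
  exact sub_eq_zero.1 (mem_vanishingIdeal.1 (lift_sub_lift_mem I hgen Φ) x y ⟨hx, hy⟩)

theorem lift_restrict_insert_sub_mem_idealThrough (c : α) (Q : Set α) :
    lift 𝕜 (restrict (insert c Q) ∘ v) Φ - lift 𝕜 (restrict Q ∘ v) Φ ∈ idealThrough c := by
  refine lift_sub_lift_mem _ (fun i => mem_idealThrough.2 fun x y hxy => ?_) Φ
  by_cases hle : x ≤ y
  · have hx : x ≠ c := by rintro rfl; exact hxy ⟨le_rfl, hle⟩
    have hy : y ≠ c := by rintro rfl; exact hxy ⟨hle, le_rfl⟩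
    rw [sub_apply, Function.comp_apply, Function.comp_apply, restrict_insert_apply hx hy, sub_self]
  · exact apply_eq_zero_of_not_le hle _

theorem lift_restrict_insert_insert_add {a b : α} (hab : ¬a ≤ b) (hba : ¬b ≤ a) (Q : Set α) :
    lift 𝕜 (restrict (insert a (insert b Q)) ∘ v) Φ + lift 𝕜 (restrict Q ∘ v) Φ =
      lift 𝕜 (restrict (insert a Q) ∘ v) Φ + lift 𝕜 (restrict (insert b Q) ∘ v) Φ := by
  induction Φ with
  | grade0 r => simp only [AlgHom.commutes]
  | grade1 i =>
    simpa only [lift_ι_apply, Function.comp_apply] using restrict_insert_insert_add hab hba Q (v i)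
  | mul Φ Ψ hΦ hΨ =>
    simp only [map_mul]
    exact mul_add_mul_eq_mul_add_mul_of_add_eq hΦ hΨ
      (mul_eq_zero_of_mem_idealThrough hab (lift_restrict_insert_sub_mem_idealThrough v Φ a Q)
        (lift_restrict_insert_sub_mem_idealThrough v Ψ b Q))
      (mul_eq_zero_of_mem_idealThrough hba (lift_restrict_insert_sub_mem_idealThrough v Φ b Q)
        (lift_restrict_insert_sub_mem_idealThrough v Ψ a Q))
  | add Φ Ψ hΦ hΨ =>
    simp only [map_add]
    rw [add_add_add_comm, hΦ, hΨ, add_add_add_comm]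

theorem lift_restrict_eq_zero_of_forall_isChain
    (h : ∀ D : Finset α, IsChain (· ≤ ·) (D : Set α) → lift 𝕜 (restrict ↑D ∘ v) Φ = 0)
    (D : Finset α) : lift 𝕜 (restrict ↑D ∘ v) Φ = 0 := by
  refine Finset.induction_on_isChain (P := fun Q => lift 𝕜 (restrict Q ∘ v) Φ = 0) h
    (fun a b Q hab hba hQ haQ hbQ => ?_) D
  rw [← add_left_inj (lift 𝕜 (restrict Q ∘ v) Φ), lift_restrict_insert_insert_add v Φ hab hba,
    hQ, haQ, hbQ, add_zero]

end Lift

end IncidenceAlgebra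

section GradedPI

open IncidenceAlgebra

variable {F α G : Type*} [Field F] [PartialOrder α] [LocallyFiniteOrder α] [Group G]

theorem restrict_mem_elemSubspace {θ : α → G} {g : G} {f : IncidenceAlgebra F α} (Q : Set α)
    (hf : f ∈ elemSubspace F θ g) : restrict Q f ∈ elemSubspace F θ g := fun x y hxy hg => by
  by_cases hQ : x ∈ Q ∧ y ∈ Q
  · rw [restrict_apply_of_mem hQ.1 hQ.2]; exact hf x y hxy hg
  · exact restrict_apply_of_notMem hQ f

theorem restrict_mem_chainSubspace {Q C : Set α} (hQC : Q ⊆ C) (f : IncidenceAlgebra F α) :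
    restrict Q f ∈ chainSubspace F C := fun _ _ hC =>
  restrict_apply_of_notMem (fun hQ => hC ⟨hQC hQ.1, hQC hQ.2⟩) f

end GradedPI

theorem gradedPI_iff_forall_maxChain_general {F α G : Type*} [Field F] [PartialOrder α]
    [LocallyFiniteOrder α] [DecidableEq α] [Group G]
    (θ : α → G) (Phi : FreeAlgebra F (ℕ × G)) :
    IsGradedPI (elemSubspace F θ) Phi ↔
      ∀ C : Set α, IsMaxChain (· ≤ ·) C →
        IsGradedPI (fun g : G => elemSubspace F θ g ⊓ chainSubspace F C) Phi := by
  refine ⟨fun hPI C _ v hv => hPI v fun p => (hv p).1, fun h v hv => ?_⟩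
  have hchain (D : Finset α) (hD : IsChain (· ≤ ·) (D : Set α)) :
      FreeAlgebra.lift F (IncidenceAlgebra.restrict ↑D ∘ v) Phi = 0 := by
    obtain ⟨C, hC, hDC⟩ := hD.exists_maxChain
    exact h C hC _ fun p =>
      ⟨restrict_mem_elemSubspace _ (hv p), restrict_mem_chainSubspace hDC (v p)⟩
  ext z w hzw
  rw [← IncidenceAlgebra.lift_restrict_apply_of_ordConnected v Phi Set.ordConnected_Icc
    (Set.left_mem_Icc.2 hzw) (Set.right_mem_Icc.2 hzw), ← Finset.coe_Icc,
    IncidenceAlgebra.lift_restrict_eq_zero_of_forall_isChain v Phi hchain]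

/-- for a locally finite bounded poset `P`, a field `F` of characteristic zero
and `θ : P → G` with `G_θ` finite, a polynomial `Φ` is a `G`-graded polynomial identity of the
elementary grading `A^θ` of `I(P,F)` if and only if, for every maximal chain `C ⊆ P`, it is a
`G`-graded polynomial identity of the subalgebra `I(C,F)` with the grading induced by the
restriction of `θ`; i.e. `T_G(A^θ) = ⋂_C T_G(A_C^{θ|_C})`. -/
theorem gradedPI_iff_forall_maxChain {F α G : Type*} [Field F] [CharZero F] [PartialOrder α]
    [LocallyFiniteOrder α] [DecidableEq α] [Group G]
    (hbdd : ∃ n : ℕ, ∀ C : Set α, IsChain (· ≤ ·) C → C.Finite ∧ C.ncard ≤ n)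
    (θ : α → G) (hθ : {g : G | ∃ x y : α, x ≤ y ∧ (θ x)⁻¹ * θ y = g}.Finite)
    (Phi : FreeAlgebra F (ℕ × G)) :
    IsGradedPI (elemSubspace F θ) Phi ↔
      ∀ C : Set α, IsMaxChain (· ≤ ·) C →
        IsGradedPI (fun g : G => elemSubspace F θ g ⊓ chainSubspace F C) Phi :=
  gradedPI_iff_forall_maxChain_general θ Phi
end
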